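/- arXiv:1001.3044 — 5 statements merged into one kernel-verified Lean document; each statement's English description precedes it below -/
import Mathlib

section
/- Construction of the fixed-point set in the lower bound for randomized mutual exclusion (core combinatorial content of Theorem 3): Let n and T be positive integers with n ≥ 2T + 2, and suppose each process p ∈ {0,...,n−1} has a transmission schedule (ℓ(p), π(p)) with 1 ≤ ℓ(p) ≤ T. Then there exists a subset S ⊆ {0,...,n−1} with |S| ≥ 2 such that: (i) for every round i with 1 ≤ i ≤ T, it is NOT the case that exactly one process p ∈ S transmits at round i; and (ii) at least two processes p ∈ S attain the minimum schedule length, i.e., |{p ∈ S : ℓ(p) = min_{q∈S} ℓ(q)}| ≥ 2. -/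
/-!
While some round has a lone transmitter, or the minimal length is attained by a single process,
delete that process. Deleting a lone transmitter silences its round for good and deleting the
unique minimiser removes its length value for good, so every deletion lowers the number of active
rounds plus the number of distinct lengths. Both start at most `T`, so from `n > 2T` processes the
invariant "active rounds + distinct lengths < size" survives every deletion; it keeps the set
nonempty, hence the deletions stop, and they stop only at a set with no lone transmitter and two
minimisers.
-/

open Finset

theorem Finset.card_image_erase_lt {α β : Type*} [DecidableEq α] [DecidableEq β]
    (f : α → β) {S : Finset α} {p : α} (hp : p ∈ S) (hf : ∀ q ∈ S, q ≠ p → f q ≠ f p) :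
    #((S.erase p).image f) < #(S.image f) := by
  refine card_lt_card ((ssubset_iff_of_subset
    (image_subset_image (erase_subset p S))).2 ⟨f p, mem_image_of_mem f hp, ?_⟩)
  rw [mem_image]
  rintro ⟨q, hq, hfq⟩
  exact hf q (mem_of_mem_erase hq) (ne_of_mem_erase hq) hfq

namespace TransmissionSchedule

variable {α β : Type*}

open scoped Classical in
noncomputable def activeRounds (tx : α → β → Prop) (R : Finset β) (S : Finset α) : Finset β :=
  {i ∈ R | ∃ p ∈ S, tx p i}

variable (tx : α → β → Prop) (R : Finset β)

theorem mem_activeRounds {S : Finset α} {i : β} :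
    i ∈ activeRounds tx R S ↔ i ∈ R ∧ ∃ p ∈ S, tx p i := by
  classical
  simp [activeRounds]

theorem card_activeRounds_le (S : Finset α) : #(activeRounds tx R S) ≤ #R := by
  classical
  exact card_filter_le _ _

theorem activeRounds_mono {S S' : Finset α} (h : S ⊆ S') :
    activeRounds tx R S ⊆ activeRounds tx R S' := by
  intro i hi
  rw [mem_activeRounds] at hi ⊢
  obtain ⟨hiR, p, hp, hpi⟩ := hi
  exact ⟨hiR, p, h hp, hpi⟩

theorem card_activeRounds_erase_lt [DecidableEq α] {S : Finset α} {i : β} {p : α} (hi : i ∈ R)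
    (hlone : ∃! p, p ∈ S ∧ tx p i) (hpS : p ∈ S) (hpi : tx p i) :
    #(activeRounds tx R (S.erase p)) < #(activeRounds tx R S) := by
  refine card_lt_card ((ssubset_iff_of_subset
    (activeRounds_mono tx R (erase_subset p S))).2 ⟨i, ?_, ?_⟩)
  · exact (mem_activeRounds tx R).2 ⟨hi, p, hpS, hpi⟩
  · rw [mem_activeRounds]
    rintro ⟨-, q, hq, hqi⟩
    exact (mem_erase.1 hq).1 (hlone.unique ⟨(mem_erase.1 hq).2, hqi⟩ ⟨hpS, hpi⟩)

variable (ℓ : α → ℕ)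

def IsFixedPointSet (S : Finset α) : Prop :=
  (∀ i ∈ R, ¬ ∃! p, p ∈ S ∧ tx p i) ∧
    ∃ p ∈ S, ∃ q ∈ S, p ≠ q ∧ ∀ r ∈ S, ℓ p ≤ ℓ r ∧ ℓ q ≤ ℓ r

theorem exists_isFixedPointSet_subset [DecidableEq α] (S : Finset α)
    (hS : #(activeRounds tx R S) + #(S.image ℓ) < #S) :
    ∃ S' ⊆ S, IsFixedPointSet tx R ℓ S' := by
  induction S using Finset.strongInduction with
  | H S ih =>
  have descend : ∀ p ∈ S, #(activeRounds tx R (S.erase p)) + #((S.erase p).image ℓ) <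
      #(activeRounds tx R S) + #(S.image ℓ) →
      ∃ S' ⊆ S, IsFixedPointSet tx R ℓ S' := by
    intro p hp hdrop
    have hcard := card_erase_of_mem hp
    obtain ⟨S', hS', hfix⟩ := ih (S.erase p) (erase_ssubset hp) (by omega)
    exact ⟨S', hS'.trans (erase_subset p S), hfix⟩
  by_cases hlone : ∃ i ∈ R, ∃! p, p ∈ S ∧ tx p i
  · obtain ⟨i, hi, hu⟩ := hlone
    obtain ⟨p, hpS, hpi⟩ := hu.exists
    have hact := card_activeRounds_erase_lt tx R hi hu hpS hpi
    have himg := card_le_card (image_subset_image (f := ℓ) (erase_subset p S))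
    exact descend p hpS (by omega)
  by_cases hmin : ∃ p ∈ S, ∀ q ∈ S, q ≠ p → ℓ p < ℓ q
  · obtain ⟨p, hpS, hp⟩ := hmin
    have hact := card_le_card (activeRounds_mono tx R (erase_subset p S))
    have himg := card_image_erase_lt ℓ hpS fun q hq hqp => (hp q hq hqp).ne'
    exact descend p hpS (by omega)
  · obtain ⟨p, hpS, hp⟩ := exists_min_image S ℓ (card_pos.1 (by omega))
    push Not at hlone hmin
    obtain ⟨q, hqS, hqp, hq⟩ := hmin p hpS
    have hqp' : ℓ q = ℓ p := le_antisymm hq (hp q hqS)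
    exact ⟨S, subset_rfl, hlone, p, hpS, q, hqS, hqp.symm,
      fun r hr => ⟨hp r hr, hqp' ▸ hp r hr⟩⟩

end TransmissionSchedule

open TransmissionSchedule in
theorem fixed_point_set_exists_general (n T : ℕ) (hn : 2 * T + 2 ≤ n)
    (ℓ : Fin n → ℕ) (π : Fin n → ℕ → Bool)
    (hℓ : ∀ p : Fin n, 1 ≤ ℓ p ∧ ℓ p ≤ T) :
    ∃ S : Set (Fin n), 2 ≤ S.ncard ∧
      (∀ i : ℕ, 1 ≤ i → i ≤ T →
        ¬ ∃! p : Fin n, p ∈ S ∧ (i ≤ ℓ p ∧ π p i = true)) ∧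
      2 ≤ {p ∈ S | ℓ p = sInf (ℓ '' S)}.ncard := by
  let tx (p : Fin n) (i : ℕ) : Prop := i ≤ ℓ p ∧ π p i = true
  have hact : #(activeRounds tx (Icc 1 T) univ) ≤ T := by
    simpa using card_activeRounds_le tx (Icc 1 T) univ
  have himg : #(univ.image ℓ) ≤ T := by
    simpa using card_le_card (s := univ.image ℓ) (t := Icc 1 T)
      (image_subset_iff.2 fun p _ => mem_Icc.2 (hℓ p))
  obtain ⟨S, -, hlone, p, hp, q, hq, hpq, hmin⟩ :=
    exists_isFixedPointSet_subset tx (Icc 1 T) ℓ univ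
      (by rw [card_univ, Fintype.card_fin]; omega)
  have hsInf {r} (hr : r ∈ S) (hle : ∀ s ∈ S, ℓ r ≤ ℓ s) : ℓ r = sInf (ℓ '' ↑S) :=
    (IsLeast.csInf_eq (s := ℓ '' ↑S)
      ⟨Set.mem_image_of_mem ℓ hr, Set.forall_mem_image.2 hle⟩).symm
  refine ⟨S, (Set.one_lt_ncard_iff (Set.toFinite _)).2 ⟨p, q, hp, hq, hpq⟩,
    fun i hi hiT => hlone i (mem_Icc.2 ⟨hi, hiT⟩),
    (Set.one_lt_ncard_iff (Set.toFinite _)).2 ⟨p, q, ?_, ?_, hpq⟩⟩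
  · exact Set.mem_sep hp (hsInf hp fun r hr => (hmin r hr).1)
  · exact Set.mem_sep hq (hsInf hq fun r hr => (hmin r hr).2)

/-- Construction of the fixed-point set in the lower bound for randomized
mutual exclusion (core combinatorial content of Theorem 3).
Process `p` transmits at round `i` iff `i ≤ ℓ p ∧ π p i = true`. -/
theorem fixed_point_set_exists (n T : ℕ) (hT : 0 < T) (hn : 2 * T + 2 ≤ n)
    (ℓ : Fin n → ℕ) (π : Fin n → ℕ → Bool)
    (hℓ : ∀ p : Fin n, 1 ≤ ℓ p ∧ ℓ p ≤ T) :
    ∃ S : Set (Fin n), 2 ≤ S.ncard ∧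
      (∀ i : ℕ, 1 ≤ i → i ≤ T →
        ¬ ∃! p : Fin n, p ∈ S ∧ (i ≤ ℓ p ∧ π p i = true)) ∧
      2 ≤ {p ∈ S | ℓ p = sInf (ℓ '' S)}.ncard :=
  fixed_point_set_exists_general n T hn ℓ π hℓ
end

section
/- Stabilization and size of the removal sequence (paper's property 1 of the set P*): For the sequence of sets P_0 ⊇ P_1 ⊇ P_2 ⊇ ... defined by the odd/even removal rules, there exists an index j₀ such that P_j = P_{j₀} for all j ≥ j₀; moreover |P_{j₀}| ≥ n − 2T, so in particular if n ≥ 2T + 2 then the eventually-constant value P* = P_{j₀} satisfies |P*| ≥ 2. -/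
/-!
Both removal rules only delete, so the chain is antitone in the finite lattice `Set (Fin n)`
and therefore stabilizes. A process removed at an odd step is the unique member of the current
set transmitting at some round `i ∈ [1, T]`; as later sets are smaller, no process removed
later can own the same round, so odd steps remove at most `T` processes altogether. Likewise a
process removed at an even step is the unique member of the current set of length
`ℓ p ∈ [1, T]`, so even steps remove at most `T` processes altogether.
-/

open Set

theorem ncard_iUnion_sdiff_le_of_unique_tag {α β : Type*} {Q R : ℕ → Set α} (hQ : Antitone Q)
    {s : Set β} (hs : s.Finite) (tagged : α → β → Prop)
    (hR : ∀ k, ∀ p ∈ Q k \ R k,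
      ∃ t ∈ s, tagged p t ∧ ∀ q ∈ Q k, tagged q t → q = p) :
    (⋃ k, Q k \ R k).ncard ≤ s.ncard := by
  obtain hempty | ⟨p₀, hp₀⟩ := (⋃ k, Q k \ R k).eq_empty_or_nonempty
  · simp [hempty]
  have : Nonempty β := by
    obtain ⟨k, hk⟩ := mem_iUnion.1 hp₀
    obtain ⟨t, -⟩ := hR k p₀ hk
    exact ⟨t⟩
  choose! k hk using fun p (hp : p ∈ ⋃ k, Q k \ R k) => mem_iUnion.1 hp
  choose! t hts htag huniq using fun p hp => hR (k p) p (hk p hp)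
  -- An element `p'` taken out at a later step still lies in `Q (k p)`, where `p` owns its tag.
  have eq_of_le : ∀ p ∈ ⋃ k, Q k \ R k, ∀ p' ∈ ⋃ k, Q k \ R k,
      k p ≤ k p' → t p = t p' → p = p' := fun p hp p' hp' hle heq =>
    (huniq p hp p' (hQ hle (hk p' hp').1) (heq ▸ htag p' hp')).symm
  refine ncard_le_ncard_of_injOn t hts (fun p hp p' hp' heq => ?_) hs
  rcases le_total (k p) (k p') with hle | hle
  · exact eq_of_le p hp p' hp' hle heq
  · exact (eq_of_le p' hp' p hp hle heq.symm).symm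

theorem exists_mem_notMem_succ_of_mem_zero {α : Type*} {P : ℕ → Set α} {p : α}
    (h0 : p ∈ P 0) {j : ℕ} (hj : p ∉ P j) : ∃ m, p ∈ P m ∧ p ∉ P (m + 1) := by
  induction j with
  | zero => exact absurd h0 hj
  | succ j ih =>
    by_cases hpj : p ∈ P j
    · exact ⟨j, hpj, hj⟩
    · exact ih hpj

theorem compl_subset_iUnion_sdiff_even_union_odd {α : Type*} {P : ℕ → Set α}
    (hP0 : P 0 = univ) (j : ℕ) :
    (P j)ᶜ ⊆ (⋃ k, P (2 * k) \ P (2 * k + 1)) ∪ ⋃ k, P (2 * k + 1) \ P (2 * k + 2) := by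
  intro p hp
  obtain ⟨m, hm⟩ := exists_mem_notMem_succ_of_mem_zero (hP0 ▸ mem_univ p) hp
  obtain ⟨k, rfl | rfl⟩ := Nat.even_or_odd' m
  exacts [Or.inl (mem_iUnion_of_mem k hm), Or.inr (mem_iUnion_of_mem k hm)]

theorem removal_sequence_stabilizes_general (n T : ℕ)
    (ℓ : Fin n → ℕ) (π : Fin n → ℕ → Bool)
    (hℓ : ∀ p : Fin n, 1 ≤ ℓ p ∧ ℓ p ≤ T)
    (P : ℕ → Set (Fin n))
    (hP0 : P 0 = Set.univ)
    (hodd : ∀ j : ℕ, P (2 * j + 1) = P (2 * j) \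
      {p ∈ P (2 * j) | ∃ i : ℕ, 1 ≤ i ∧ i ≤ T ∧ (i ≤ ℓ p ∧ π p i = true) ∧
        ∀ q ∈ P (2 * j), q ≠ p → ¬ (i ≤ ℓ q ∧ π q i = true)})
    (heven : ∀ j : ℕ, P (2 * j + 2) = P (2 * j + 1) \
      {p ∈ P (2 * j + 1) | ∀ q ∈ P (2 * j + 1), q ≠ p → ℓ p < ℓ q}) :
    ∃ j₀ : ℕ, (∀ j : ℕ, j₀ ≤ j → P j = P j₀) ∧
      n - 2 * T ≤ (P j₀).ncard ∧
      (2 * T + 2 ≤ n → 2 ≤ (P j₀).ncard) := by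
  have hanti : Antitone P := antitone_nat_of_succ_le fun j => by
    obtain ⟨k, rfl | rfl⟩ := Nat.even_or_odd' j
    · exact (hodd k).trans_le sdiff_subset
    · exact (heven k).trans_le sdiff_subset
  obtain ⟨j₀, hj₀⟩ := WellFoundedLT.antitone_chain_condition hanti
  refine ⟨j₀, fun j hj => (hj₀ j hj).symm, ?_⟩
  have hodd_le : (⋃ k, P (2 * k) \ P (2 * k + 1)).ncard ≤ T := by
    simpa using ncard_iUnion_sdiff_le_of_unique_tag (fun a b h => hanti (by omega))
      (finite_Icc 1 T) (fun p i => i ≤ ℓ p ∧ π p i = true) fun k p hp => by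
        rw [hodd k, sdiff_sdiff_right_self] at hp
        obtain ⟨-, -, i, hi1, hiT, hpi, hpriv⟩ := hp
        exact ⟨i, ⟨hi1, hiT⟩, hpi, fun q hq hqi => by_contra fun hqp => hpriv q hq hqp hqi⟩
  have heven_le : (⋃ k, P (2 * k + 1) \ P (2 * k + 2)).ncard ≤ T := by
    simpa using ncard_iUnion_sdiff_le_of_unique_tag (fun a b h => hanti (by omega))
      (finite_Icc 1 T) (fun p t => ℓ p = t) fun k p hp => by
        rw [heven k, sdiff_sdiff_right_self] at hp
        obtain ⟨-, -, hmin⟩ := hp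
        exact ⟨ℓ p, hℓ p, rfl, fun q hq hqp =>
          by_contra fun hne => (hmin q hq hne).ne hqp.symm⟩
  have hsum : (P j₀).ncard + (P j₀)ᶜ.ncard = n := by
    rw [ncard_add_ncard_compl, Nat.card_eq_fintype_card, Fintype.card_fin]
  have := (ncard_le_ncard (compl_subset_iUnion_sdiff_even_union_odd hP0 j₀)).trans
    (ncard_union_le _ _)
  omega

/-- Stabilization and size of the removal sequence (paper's property 1 of `P*`). -/
theorem removal_sequence_stabilizes (n T : ℕ) (hT : 0 < T)
    (ℓ : Fin n → ℕ) (π : Fin n → ℕ → Bool)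
    (hℓ : ∀ p : Fin n, 1 ≤ ℓ p ∧ ℓ p ≤ T)
    (P : ℕ → Set (Fin n))
    (hP0 : P 0 = Set.univ)
    (hodd : ∀ j : ℕ, P (2 * j + 1) = P (2 * j) \
      {p ∈ P (2 * j) | ∃ i : ℕ, 1 ≤ i ∧ i ≤ T ∧ (i ≤ ℓ p ∧ π p i = true) ∧
        ∀ q ∈ P (2 * j), q ≠ p → ¬ (i ≤ ℓ q ∧ π q i = true)})
    (heven : ∀ j : ℕ, P (2 * j + 2) = P (2 * j + 1) \
      {p ∈ P (2 * j + 1) | ∀ q ∈ P (2 * j + 1), q ≠ p → ℓ p < ℓ q}) :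
    ∃ j₀ : ℕ, (∀ j : ℕ, j₀ ≤ j → P j = P j₀) ∧
      n - 2 * T ≤ (P j₀).ncard ∧
      (2 * T + 2 ≤ n → 2 ≤ (P j₀).ncard) :=
  removal_sequence_stabilizes_general n T ℓ π hℓ P hP0 hodd heven
end

section
/- At most T processes are ever removed by the odd-step rule: the set ⋃_{j≥0} (P_{2j} \ P_{2j+1}) of all processes removed while constructing some P_{2j+1} from P_{2j} has cardinality at most T. (Equivalently, for each round i ∈ {1,...,T}, at most one process is ever removed with witness round i: once a process that was the unique transmitter at round i among the current set is removed, no remaining process transmits at round i.) -/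
/-!
Each process removed at an odd step is the only member of the current set transmitting at some
round `i ∈ [1, T]`. Since the sets only shrink, no process still present afterwards transmits at
round `i`, so the same round cannot witness a later removal: the witness round is an injective
function of the removed process.
-/

section

variable {α β : Type*} (R : α → β → Prop)

def TransmitsAlone (s : Set α) (p : α) (i : β) : Prop :=
  R p i ∧ ∀ q ∈ s, q ≠ p → ¬ R q i

variable {R}

theorem TransmitsAlone.eq_of_mem {s : Set α} {p q : α} {i : β} (h : TransmitsAlone R s p i)
    (hq : q ∈ s) (hRq : R q i) : q = p := by
  by_contra hne
  exact h.2 q hq hne hRq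

theorem TransmitsAlone.eq_of_antitone {s : ℕ → Set α} (hs : Antitone s) {p q : α} {i : β}
    {j k : ℕ} (hp : p ∈ s j) (hq : q ∈ s k) (hpi : TransmitsAlone R (s j) p i)
    (hqi : TransmitsAlone R (s k) q i) : p = q := by
  rcases le_total j k with hle | hle
  · exact (hpi.eq_of_mem (hs hle hq) hqi.1).symm
  · exact hqi.eq_of_mem (hs hle hp) hpi.1

theorem ncard_iUnion_diff_le_of_transmitsAlone {s t : ℕ → Set α} (hs : Antitone s)
    {W : Set β} (hW : W.Finite)
    (hremoved : ∀ j, ∀ p ∈ s j \ t j, ∃ i ∈ W, TransmitsAlone R (s j) p i) :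
    (⋃ j, s j \ t j).ncard ≤ W.ncard := by
  have hwitness :
      ∀ p ∈ ⋃ j, s j \ t j, ∃ i ∈ W, ∃ j, p ∈ s j ∧ TransmitsAlone R (s j) p i := by
    intro p hp
    obtain ⟨j, hpj⟩ := Set.mem_iUnion.mp hp
    obtain ⟨i, hiW, hi⟩ := hremoved j p hpj
    exact ⟨i, hiW, j, hpj.1, hi⟩
  choose round hround_mem j hmem halone using hwitness
  have : Finite W := hW
  refine Nat.card_le_card_of_injective
    (fun p : ↥(⋃ j, s j \ t j) ↦ (⟨round p p.2, hround_mem p p.2⟩ : W)) ?_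
  rintro ⟨p, hp⟩ ⟨q, hq⟩ hpq
  have hpq : round p hp = round q hq := congrArg Subtype.val hpq
  exact Subtype.ext ((halone p hp).eq_of_antitone hs (hmem p hp) (hmem q hq) (hpq ▸ halone q hq))

end

theorem odd_rule_removes_at_most_T_general (n T : ℕ)
    (ℓ : Fin n → ℕ) (π : Fin n → ℕ → Bool)
    (P : ℕ → Set (Fin n))
    (hodd : ∀ j : ℕ, P (2 * j + 1) = P (2 * j) \
      {p ∈ P (2 * j) | ∃ i : ℕ, 1 ≤ i ∧ i ≤ T ∧ (i ≤ ℓ p ∧ π p i = true) ∧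
        ∀ q ∈ P (2 * j), q ≠ p → ¬ (i ≤ ℓ q ∧ π q i = true)})
    (heven : ∀ j : ℕ, P (2 * j + 2) = P (2 * j + 1) \
      {p ∈ P (2 * j + 1) | ∀ q ∈ P (2 * j + 1), q ≠ p → ℓ p < ℓ q}) :
    (⋃ j : ℕ, P (2 * j) \ P (2 * j + 1)).ncard ≤ T := by
  have hanti : Antitone fun j ↦ P (2 * j) := antitone_nat_of_succ_le fun j ↦
    (heven j ▸ Set.sdiff_subset).trans (hodd j ▸ Set.sdiff_subset)
  have hremoved : ∀ j, ∀ p ∈ P (2 * j) \ P (2 * j + 1), ∃ i ∈ Set.Icc 1 T,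
      TransmitsAlone (fun p i ↦ i ≤ ℓ p ∧ π p i = true) (P (2 * j)) p i := by
    intro j p hp
    rw [hodd j, Set.sdiff_sdiff_right_self] at hp
    obtain ⟨-, -, i, hi1, hiT, htransmits, halone⟩ := hp
    exact ⟨i, ⟨hi1, hiT⟩, htransmits, halone⟩
  calc (⋃ j : ℕ, P (2 * j) \ P (2 * j + 1)).ncard
      ≤ (Set.Icc 1 T).ncard :=
        ncard_iUnion_diff_le_of_transmitsAlone hanti (Set.finite_Icc 1 T) hremoved
    _ = T := by simp

/-- At most `T` processes are ever removed by the odd-step rule. -/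
theorem odd_rule_removes_at_most_T (n T : ℕ) (hT : 0 < T)
    (ℓ : Fin n → ℕ) (π : Fin n → ℕ → Bool)
    (hℓ : ∀ p : Fin n, 1 ≤ ℓ p ∧ ℓ p ≤ T)
    (P : ℕ → Set (Fin n))
    (hP0 : P 0 = Set.univ)
    (hodd : ∀ j : ℕ, P (2 * j + 1) = P (2 * j) \
      {p ∈ P (2 * j) | ∃ i : ℕ, 1 ≤ i ∧ i ≤ T ∧ (i ≤ ℓ p ∧ π p i = true) ∧
        ∀ q ∈ P (2 * j), q ≠ p → ¬ (i ≤ ℓ q ∧ π q i = true)})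
    (heven : ∀ j : ℕ, P (2 * j + 2) = P (2 * j + 1) \
      {p ∈ P (2 * j + 1) | ∀ q ∈ P (2 * j + 1), q ≠ p → ℓ p < ℓ q}) :
    (⋃ j : ℕ, P (2 * j) \ P (2 * j + 1)).ncard ≤ T :=
  odd_rule_removes_at_most_T_general n T ℓ π P hodd heven
end

section
/- At most T processes are ever removed by the even-step rule: the set ⋃_{j≥0} (P_{2j+1} \ P_{2j+2}) of all processes removed while constructing some P_{2j+2} from P_{2j+1} has cardinality at most T. (Equivalently, the length function ℓ is injective on the set of all processes removed at even steps: each even step removes at most the unique process of strictly minimal length, and after such a removal all remaining processes have strictly larger lengths.) -/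
/-!
Each even step can only remove a process whose length is strictly smaller than that of every
other surviving process. Since the surviving sets shrink, a process removed at a later step was
still present at every earlier one, so distinct removed processes have distinct lengths. The
lengths lie in `{1, …, T}`, hence at most `T` processes are removed.
-/

open Set

theorem Set.injOn_iUnion_of_forall_lt_of_antitone {α β : Type*} [LinearOrder β] {f : α → β}
    {Q R : ℕ → Set α} (hQ : Antitone Q) (hRQ : ∀ j, R j ⊆ Q j)
    (hR : ∀ j, ∀ p ∈ R j, ∀ q ∈ Q j, q ≠ p → f p < f q) :
    InjOn f (⋃ j, R j) := by
  have key : ∀ j k p q, j ≤ k → p ∈ R j → q ∈ R k → f p = f q → p = q := by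
    intro j k p q hjk hp hq hpq
    by_contra hne
    exact (hR j p hp q (hQ hjk (hRQ k hq)) (Ne.symm hne)).ne hpq
  intro p hp q hq hpq
  obtain ⟨j, hpj⟩ := mem_iUnion.mp hp
  obtain ⟨k, hqk⟩ := mem_iUnion.mp hq
  rcases le_total j k with hjk | hkj
  · exact key j k p q hjk hpj hqk hpq
  · exact (key k j q p hkj hqk hpj hpq.symm).symm

theorem Set.ncard_le_of_injOn_Icc {α : Type*} {s : Set α} {f : α → ℕ} {T : ℕ}
    (hf : ∀ a ∈ s, f a ∈ Icc 1 T) (hinj : InjOn f s) : s.ncard ≤ T := by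
  simpa using ncard_le_ncard_of_injOn f hf hinj

theorem even_rule_removes_at_most_T_general (n T : ℕ)
    (ℓ : Fin n → ℕ) (π : Fin n → ℕ → Bool)
    (hℓ : ∀ p : Fin n, 1 ≤ ℓ p ∧ ℓ p ≤ T)
    (P : ℕ → Set (Fin n))
    (hodd : ∀ j : ℕ, P (2 * j + 1) = P (2 * j) \
      {p ∈ P (2 * j) | ∃ i : ℕ, 1 ≤ i ∧ i ≤ T ∧ (i ≤ ℓ p ∧ π p i = true) ∧
        ∀ q ∈ P (2 * j), q ≠ p → ¬ (i ≤ ℓ q ∧ π q i = true)})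
    (heven : ∀ j : ℕ, P (2 * j + 2) = P (2 * j + 1) \
      {p ∈ P (2 * j + 1) | ∀ q ∈ P (2 * j + 1), q ≠ p → ℓ p < ℓ q}) :
    (⋃ j : ℕ, P (2 * j + 1) \ P (2 * j + 2)).ncard ≤ T := by
  have hP : Antitone P := by
    refine antitone_nat_of_succ_le fun k => ?_
    obtain ⟨j, rfl | rfl⟩ := Nat.even_or_odd' k
    · exact (hodd j).le.trans sdiff_subset
    · exact (heven j).le.trans sdiff_subset
  have hremoved : ∀ j, ∀ p ∈ P (2 * j + 1) \ P (2 * j + 2),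
      ∀ q ∈ P (2 * j + 1), q ≠ p → ℓ p < ℓ q := by
    intro j p hp
    rw [heven j, sdiff_sdiff_right_self] at hp
    exact hp.2.2
  refine ncard_le_of_injOn_Icc (fun p _ => hℓ p) ?_
  exact injOn_iUnion_of_forall_lt_of_antitone
    (hP.comp_monotone fun _ _ h => by omega) (fun _ => sdiff_subset) hremoved

/-- At most `T` processes are ever removed by the even-step rule. -/
theorem even_rule_removes_at_most_T (n T : ℕ) (hT : 0 < T)
    (ℓ : Fin n → ℕ) (π : Fin n → ℕ → Bool)
    (hℓ : ∀ p : Fin n, 1 ≤ ℓ p ∧ ℓ p ≤ T)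
    (P : ℕ → Set (Fin n))
    (hP0 : P 0 = Set.univ)
    (hodd : ∀ j : ℕ, P (2 * j + 1) = P (2 * j) \
      {p ∈ P (2 * j) | ∃ i : ℕ, 1 ≤ i ∧ i ≤ T ∧ (i ≤ ℓ p ∧ π p i = true) ∧
        ∀ q ∈ P (2 * j), q ≠ p → ¬ (i ≤ ℓ q ∧ π q i = true)})
    (heven : ∀ j : ℕ, P (2 * j + 2) = P (2 * j + 1) \
      {p ∈ P (2 * j + 1) | ∀ q ∈ P (2 * j + 1), q ≠ p → ℓ p < ℓ q}) :
    (⋃ j : ℕ, P (2 * j + 1) \ P (2 * j + 2)).ncard ≤ T :=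
  even_rule_removes_at_most_T_general n T ℓ π hℓ P hodd heven
end

section
/- Error bound for Check_If_Single (Lemma 3, case k ≥ 2): Let ε ∈ (0,1], let k ≥ 2, and let ℓ be a positive integer with ℓ ≥ log₂(1/ε). With X : {1,...,ℓ} × {1,...,k} → {0,1} chosen uniformly at random, the probability that there exists a process p ∈ {1,...,k} that hears nothing throughout the procedure — i.e., such that for every pair j ∈ {1,...,ℓ} and every process q, X_{j,q} = X_{j,p} — is at most (1/2)^ℓ ≤ ε. Consequently, when k ≥ 2 processes execute Check_If_Single with ℓ = ⌈log₂(1/ε)⌉ pairs of rounds, with probability at least 1 − ε no process enters the critical section. -/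
/-! A configuration in which some process hears nothing is one whose value in each pair `j`
does not depend on the process, i.e. a function of `j` alone. For `k ≥ 1` there are exactly
`2 ^ ℓ` such configurations among the `2 ^ (ℓ k)`, so for `k ≥ 2` the event has probability
`2 ^ ℓ / 2 ^ (ℓ k) ≤ 2 ^ (-ℓ)`, and `2 ^ (-ℓ) ≤ ε` is the hypothesis `ℓ ≥ log₂ (1 / ε)`. -/

open Finset

section RowConstant

variable {ι κ α : Type*} [Fintype ι] [Fintype κ] [Fintype α] [DecidableEq ι]
  [DecidableEq κ]

theorem filter_exists_forall_eq_eq_map_comp_fst [Nonempty κ]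
    [DecidablePred fun X : ι × κ → α => ∃ p : κ, ∀ j : ι, ∀ q : κ, X (j, q) = X (j, p)] :
    univ.filter (fun X : ι × κ → α => ∃ p : κ, ∀ j : ι, ∀ q : κ, X (j, q) = X (j, p)) =
      univ.map ⟨fun f : ι → α => f ∘ Prod.fst, Prod.fst_surjective.injective_comp_right⟩ := by
  ext X
  simp only [mem_filter, mem_univ, true_and, mem_map, Function.Embedding.coeFn_mk]
  constructor
  · rintro ⟨p, hp⟩
    exact ⟨fun j => X (j, p), funext fun jq => (hp jq.1 jq.2).symm⟩
  · rintro ⟨f, rfl⟩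
    exact ⟨Classical.arbitrary κ, fun _ _ => rfl⟩

theorem card_filter_exists_forall_eq [Nonempty κ]
    [DecidablePred fun X : ι × κ → α => ∃ p : κ, ∀ j : ι, ∀ q : κ, X (j, q) = X (j, p)] :
    (univ.filter (fun X : ι × κ → α => ∃ p : κ, ∀ j : ι, ∀ q : κ, X (j, q) = X (j, p))).card =
      Fintype.card α ^ Fintype.card ι := by
  rw [filter_exists_forall_eq_eq_map_comp_fst, card_map, card_univ, Fintype.card_fun]

end RowConstant

theorem pow_div_pow_mul_le_one_div_pow {x : ℝ} (hx : 1 ≤ x) (l : ℕ) {k : ℕ} (hk : 2 ≤ k) :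
    x ^ l / x ^ (l * k) ≤ (1 / x) ^ l := by
  have hy : 1 ≤ x ^ l := one_le_pow₀ hx
  rw [pow_mul, one_div_pow, div_le_div_iff₀ (by positivity) (by positivity), one_mul, ← sq]
  exact pow_le_pow_right₀ hy hk

theorem one_div_pow_le_of_logb_one_div_le {b ε : ℝ} (hb : 1 < b) (hε : 0 < ε) {l : ℕ}
    (h : Real.logb b (1 / ε) ≤ l) : (1 / b) ^ l ≤ ε := by
  have hbl : 1 / ε ≤ b ^ l := by
    simpa only [Real.rpow_natCast] using (Real.logb_le_iff_le_rpow hb (by positivity)).mp h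
  rw [one_div_pow, div_le_iff₀ (by positivity)]
  rwa [div_le_iff₀ hε, mul_comm] at hbl

theorem check_if_single_error_bound_general (ε : ℝ) (hε0 : 0 < ε)
    (k l : ℕ) (hk : 2 ≤ k)
    (hlog : Real.logb 2 (1 / ε) ≤ (l : ℝ)) :
    ((Finset.univ.filter (fun X : Fin l × Fin k → Bool =>
        ∃ p : Fin k, ∀ j : Fin l, ∀ q : Fin k, X (j, q) = X (j, p))).card : ℝ)
      / (Fintype.card (Fin l × Fin k → Bool) : ℝ) ≤ (1 / 2 : ℝ) ^ l ∧
    (1 / 2 : ℝ) ^ l ≤ ε := by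
  have : NeZero k := ⟨by omega⟩
  refine ⟨?_, one_div_pow_le_of_logb_one_div_le one_lt_two hε0 hlog⟩
  rw [card_filter_exists_forall_eq, Fintype.card_fun, Fintype.card_prod]
  simpa only [Fintype.card_bool, Fintype.card_fin, Nat.cast_pow, Nat.cast_ofNat]
    using pow_div_pow_mul_le_one_div_pow one_le_two l hk

/-- Error bound for `Check_If_Single` (Lemma 3, case `k ≥ 2`): if `ε ∈ (0,1]`,
`k ≥ 2` and `l ≥ log₂(1/ε)` is a positive integer, then the probability
(under the uniform measure on `Fin l × Fin k → Bool`) that some process `p`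
hears nothing throughout the procedure — i.e. for every pair `j` all bits in
pair `j` equal `p`'s bit — is at most `(1/2)^l ≤ ε`; hence with probability at
least `1 - ε` no process enters the critical section. -/
theorem check_if_single_error_bound (ε : ℝ) (hε0 : 0 < ε) (hε1 : ε ≤ 1)
    (k l : ℕ) (hk : 2 ≤ k) (hl : 1 ≤ l)
    (hlog : Real.logb 2 (1 / ε) ≤ (l : ℝ)) :
    ((Finset.univ.filter (fun X : Fin l × Fin k → Bool =>
        ∃ p : Fin k, ∀ j : Fin l, ∀ q : Fin k, X (j, q) = X (j, p))).card : ℝ)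
      / (Fintype.card (Fin l × Fin k → Bool) : ℝ) ≤ (1 / 2 : ℝ) ^ l ∧
    (1 / 2 : ℝ) ^ l ≤ ε :=
  check_if_single_error_bound_general ε hε0 k l hk hlog
end
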